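/- arXiv:1501.00343 — 9 statements merged into one kernel-verified Lean document; each statement's English description precedes it below -/
import Mathlib

section
/- For any hypergraph G, the bicoloring cover number χ^c(G) equals the ceiling of the base-2 logarithm of the chromatic number χ(G). -/
/-- A family of `t` bicolorings covers the hypergraph with edge set `E` if every
hyperedge is non-monochromatic under at least one bicoloring. -/
def Covers {α : Type*} (E : Finset (Finset α)) {t : ℕ} (X : Fin t → α → Bool) : Prop :=
  ∀ e ∈ E, ∃ i : Fin t, ∃ u ∈ e, ∃ v ∈ e, X i u ≠ X i v

/-- The bicoloring cover number: minimum size of a bicoloring cover. -/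
noncomputable def coverNum {α : Type*} (E : Finset (Finset α)) : ℕ :=
  sInf {t | ∃ X : Fin t → α → Bool, Covers E X}

/-- A proper coloring: no hyperedge is monochromatic. -/
def ProperColoring {α : Type*} (E : Finset (Finset α)) {q : ℕ} (c : α → Fin q) : Prop :=
  ∀ e ∈ E, ∃ u ∈ e, ∃ v ∈ e, c u ≠ c v

/-- The chromatic number: minimum number of colors in a proper coloring. -/
noncomputable def chromNum {α : Type*} (E : Finset (Finset α)) : ℕ :=
  sInf {q | ∃ c : α → Fin q, ProperColoring E c}

theorem coverNum_eq_clog_chromNum {α : Type*} [Fintype α] (E : Finset (Finset α))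
    (hcard : ∀ e ∈ E, 2 ≤ e.card)
    (hcol : ∃ q : ℕ, ∃ c : α → Fin q, ProperColoring E c) :
    coverNum E = Nat.clog 2 (chromNum E) := by
  classical
  set q := chromNum E with hq
  set k := Nat.clog 2 q with hk
  obtain ⟨c, hc⟩ : ∃ c : α → Fin q, ProperColoring E c := Nat.sInf_mem hcol
  -- a cover of size k from c
  have hkmem : k ∈ {t | ∃ X : Fin t → α → Bool, Covers E X} := by
    refine ⟨fun i v => Nat.testBit (c v).val i, ?_⟩
    intro e he
    obtain ⟨u, hu, v, hv, huv⟩ := hc e he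
    by_contra h
    push_neg at h
    apply huv
    have hlt : ∀ w : α, (c w).val < 2 ^ k :=
      fun w => lt_of_lt_of_le (c w).isLt (Nat.le_pow_clog (by norm_num) q)
    have : (c u).val = (c v).val := by
      apply Nat.eq_of_testBit_eq
      intro j
      by_cases hj : j < k
      · simpa using h ⟨j, hj⟩ u hu v hv
      · rw [Nat.testBit_eq_false_of_lt (lt_of_lt_of_le (hlt u) (Nat.pow_le_pow_right (by norm_num) (Nat.le_of_not_lt hj))),
          Nat.testBit_eq_false_of_lt (lt_of_lt_of_le (hlt v) (Nat.pow_le_pow_right (by norm_num) (Nat.le_of_not_lt hj)))]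
    exact Fin.ext this
  apply le_antisymm (Nat.sInf_le hkmem)
  refine le_csInf ⟨k, hkmem⟩ ?_
  rintro t ⟨X, hX⟩
  -- build a proper coloring with 2^t colors
  have hproper : ProperColoring E (fun v => finFunctionFinEquiv
      (fun i : Fin t => if X i v then (1 : Fin 2) else 0)) := by
    intro e he
    obtain ⟨i, u, hu, v, hv, huv⟩ := hX e he
    refine ⟨u, hu, v, hv, ?_⟩
    intro hcontra
    apply huv
    have := finFunctionFinEquiv.injective hcontra
    have hi := congrFun this i
    cases hXu : X i u <;> cases hXv : X i v <;> simp_all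
  have hqle : q ≤ 2 ^ t := Nat.sInf_le ⟨_, hproper⟩
  calc k ≤ Nat.clog 2 (2 ^ t) := Nat.clog_mono_right 2 hqle
    _ = t := Nat.clog_pow 2 t (by norm_num)
end

section
/- For any hypergraph G, if c is a proper coloring of G using colors {0, 1, ..., q-1}, then the ⌈log₂ q⌉ bicolorings obtained by taking the individual bits of the binary representation of each vertex's color form a bicoloring cover of G; consequently χ^c(G) ≤ ⌈log₂ χ(G)⌉. -/
theorem bits_of_proper_coloring_cover {α : Type*} [Fintype α] (E : Finset (Finset α))
    (hcard : ∀ e ∈ E, 2 ≤ e.card) {q : ℕ} (c : α → Fin q) (hc : ProperColoring E c) :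
    Covers E (fun (i : Fin (Nat.clog 2 q)) (v : α) => Nat.testBit (c v : ℕ) (i : ℕ)) ∧
      coverNum E ≤ Nat.clog 2 (chromNum E) := by
  have key : ∀ {q' : ℕ} (c' : α → Fin q'), ProperColoring E c' →
      Covers E (fun (i : Fin (Nat.clog 2 q')) (v : α) => Nat.testBit (c' v : ℕ) (i : ℕ)) := by
    intro q' c' hc' e he
    obtain ⟨u, hu, v, hv, huv⟩ := hc' e he
    have hbit : ∃ i < Nat.clog 2 q', Nat.testBit (c' u : ℕ) i ≠ Nat.testBit (c' v : ℕ) i := by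
      by_contra h
      push_neg at h
      apply huv
      apply Fin.ext
      apply Nat.eq_of_testBit_eq
      intro i
      rcases lt_or_ge i (Nat.clog 2 q') with hi | hi
      · exact h i hi
      · have hq : q' ≤ 2 ^ i :=
          le_trans (Nat.le_pow_clog one_lt_two q') (Nat.pow_le_pow_right (by norm_num) hi)
        rw [Nat.testBit_lt_two_pow (lt_of_lt_of_le (c' u).isLt hq),
          Nat.testBit_lt_two_pow (lt_of_lt_of_le (c' v).isLt hq)]
    obtain ⟨i, hi, hne⟩ := hbit
    exact ⟨⟨i, hi⟩, u, hu, v, hv, by simpa using hne⟩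
  refine ⟨key c hc, ?_⟩
  have hne : ∃ c' : α → Fin (Fintype.card α), ProperColoring E c' := by
    refine ⟨Fintype.equivFin α, fun e he => ?_⟩
    obtain ⟨u, hu, v, hv, huv⟩ := Finset.one_lt_card.mp (hcard e he)
    exact ⟨u, hu, v, hv, fun h => huv ((Fintype.equivFin α).injective h)⟩
  have hmem : chromNum E ∈ {q | ∃ c : α → Fin q, ProperColoring E c} :=
    Nat.sInf_mem ⟨Fintype.card α, hne⟩
  obtain ⟨c', hc'⟩ := hmem
  exact Nat.sInf_le ⟨_, key c' hc'⟩
end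

section
/- If the vertex set of a hypergraph G can be partitioned into u independent sets, then G has a bicoloring cover of size ⌈log₂ u⌉. -/
theorem cover_of_partition_into_independent_sets {α : Type*} [Fintype α]
    (E : Finset (Finset α)) (hcard : ∀ e ∈ E, 2 ≤ e.card)
    (u : ℕ) (P : α → Fin u)
    (hind : ∀ e ∈ E, ¬ ∃ i : Fin u, ∀ v ∈ e, P v = i) :
    ∃ X : Fin (Nat.clog 2 u) → α → Bool, Covers E X := by
  refine ⟨fun i v => (P v).val.testBit i.val, fun e he => ?_⟩
  -- get two vertices with different colors
  obtain ⟨v, hv⟩ : e.Nonempty := Finset.card_pos.mp (by have := hcard e he; omega)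
  push_neg at hind
  obtain ⟨w, hw, hne⟩ := hind e he (P v)
  have hval : (P w).val ≠ (P v).val := fun h => hne (Fin.ext h)
  obtain ⟨i, hi⟩ : ∃ i, ((P w).val.testBit i) ≠ ((P v).val.testBit i) := by
    by_contra h
    push_neg at h
    exact hval (Nat.eq_of_testBit_eq h)
  have hlt : i < Nat.clog 2 u := by
    by_contra h
    push_neg at h
    have hb : ∀ n : Fin u, n.val.testBit i = false := by
      intro n
      apply Nat.testBit_lt_two_pow
      calc n.val < u := n.isLt
        _ ≤ 2 ^ Nat.clog 2 u := Nat.le_pow_clog one_lt_two u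
        _ ≤ 2 ^ i := Nat.pow_le_pow_right (by norm_num) h
    rw [hb, hb] at hi
    exact hi rfl
  exact ⟨⟨i, hlt⟩, w, hw, v, hv, hi⟩
end

section
/- For any k-uniform hypergraph G with a maximal matching M, the bicoloring cover number satisfies χ^c(G) ≤ log₂|M| + 2. -/
theorem coverNum_le_log_maximal_matching {α : Type*} [Fintype α] [DecidableEq α]
    (E : Finset (Finset α)) (k : ℕ) (hk : 2 ≤ k) (huniform : ∀ e ∈ E, e.card = k)
    (M : Finset (Finset α)) (hMsub : M ⊆ E) (hMne : M.Nonempty)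
    (hdisj : ∀ e ∈ M, ∀ f ∈ M, e ≠ f → Disjoint e f)
    (hmax : ∀ e ∈ E, ∃ m ∈ M, (e ∩ m).Nonempty) :
    (coverNum E : ℝ) ≤ Real.logb 2 (M.card) + 2 := by
  classical
  set m := M.card with hm
  have hm1 : 0 < m := Finset.card_pos.mpr hMne
  obtain ⟨e₀, he₀⟩ := hMne
  have he₀ne : e₀.Nonempty := Finset.card_pos.mp (by
    rw [huniform e₀ (hMsub he₀)]; omega)
  haveI : Nonempty α := ⟨he₀ne.choose⟩
  set L := Nat.log 2 m + 1 with hL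
  have hmL : m < 2 ^ L := Nat.lt_pow_succ_log_self (by norm_num) m
  -- index of the matching edge containing a vertex, `m` if unmatched
  set idx : α → ℕ := fun v => if h : ∃ e, e ∈ M ∧ v ∈ e then
      ((M.equivFin ⟨h.choose, h.choose_spec.1⟩ : Fin m) : ℕ) else m with hidxdef
  have hidx : ∀ v e (he : e ∈ M), v ∈ e →
      idx v = ((M.equivFin ⟨e, he⟩ : Fin m) : ℕ) := by
    intro v e he hv
    have h : ∃ e, e ∈ M ∧ v ∈ e := ⟨e, he, hv⟩
    have heq : h.choose = e := by
      by_contra hne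
      exact (Finset.disjoint_left.mp (hdisj _ h.choose_spec.1 _ he hne)
        h.choose_spec.2) hv
    have hsub : (⟨h.choose, h.choose_spec.1⟩ : {x // x ∈ M}) = ⟨e, he⟩ :=
      Subtype.ext heq
    simp only [hidxdef, dif_pos h, hsub]
  -- representative of a finset
  set rep : Finset α → α := fun s =>
    if h : s.Nonempty then h.choose else Classical.arbitrary α with hrepdef
  have hrep : ∀ s : Finset α, s.Nonempty → rep s ∈ s := by
    intro s h
    simp only [hrepdef, dif_pos h]
    exact h.choose_spec
  set special : α → Bool := fun v =>
    decide (∃ e, e ∈ M ∧ v ∈ e ∧ rep e = v) with hspecdef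
  set X : Fin (L + 1) → α → Bool := fun i v =>
    if i.val < L then (idx v).testBit i.val else special v with hXdef
  have hcov : Covers E X := by
    intro e he
    obtain ⟨f, hfM, hint⟩ := hmax e he
    obtain ⟨u, hu⟩ := hint
    rw [Finset.mem_inter] at hu
    obtain ⟨hue, huf⟩ := hu
    have huidx : idx u = ((M.equivFin ⟨f, hfM⟩ : Fin m) : ℕ) := hidx u f hfM huf
    by_cases hca : ∀ v ∈ e, idx v = idx u
    · -- e = f; use the special coloring
      have hsub : e ⊆ f := by
        intro v hv
        have h1 : idx v = idx u := hca v hv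
        have hvm : ∃ g, g ∈ M ∧ v ∈ g := by
          by_contra hnm
          have h2 : idx v = m := dif_neg hnm
          have h3 : idx u < m := by rw [huidx]; exact (M.equivFin ⟨f, hfM⟩).isLt
          omega
        obtain ⟨g, hgM, hvg⟩ := hvm
        have h2 : idx v = ((M.equivFin ⟨g, hgM⟩ : Fin m) : ℕ) := hidx v g hgM hvg
        have h4 : (M.equivFin ⟨g, hgM⟩ : Fin m) = M.equivFin ⟨f, hfM⟩ :=
          Fin.ext (by omega)
        have h5 : (⟨g, hgM⟩ : {x // x ∈ M}) = ⟨f, hfM⟩ := M.equivFin.injective h4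
        have h6 : g = f := congrArg Subtype.val h5
        exact h6 ▸ hvg
      have hef : e = f := Finset.eq_of_subset_of_card_le hsub
        (by rw [huniform e he, huniform f (hMsub hfM)])
      have hfne : f.Nonempty := ⟨u, huf⟩
      have hrepf : rep f ∈ f := hrep f hfne
      have hcard2 : 1 < f.card := by rw [huniform f (hMsub hfM)]; omega
      obtain ⟨w, hwf, hw⟩ := Finset.exists_mem_ne hcard2 (rep f)
      refine ⟨⟨L, by omega⟩, rep f, hef ▸ hrepf, w, hef ▸ hwf, ?_⟩
      have hXrep : X ⟨L, by omega⟩ (rep f) = true := by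
        simp only [hXdef, lt_irrefl, if_neg (lt_irrefl L), hspecdef,
          decide_eq_true_eq]
        exact ⟨f, hfM, hrepf, rfl⟩
      have hXw : X ⟨L, by omega⟩ w = false := by
        simp only [hXdef, if_neg (lt_irrefl L), hspecdef, decide_eq_false_iff_not]
        rintro ⟨g, hgM, hwg, hrepg⟩
        have h6 : g = f := by
          by_contra hne
          exact (Finset.disjoint_left.mp (hdisj _ hgM _ hfM hne) hwg) hwf
        exact hw (h6 ▸ hrepg).symm
      rw [hXrep, hXw]; simp
    · -- two vertices with distinct indices; use a bit coloring
      push_neg at hca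
      obtain ⟨v, hv, hne⟩ := hca
      have hall : ∀ x : α, idx x < 2 ^ L := by
        intro x
        by_cases h : ∃ g, g ∈ M ∧ x ∈ g
        · obtain ⟨g, hg, hxg⟩ := h
          have := (M.equivFin ⟨g, hg⟩).isLt
          rw [hidx x g hg hxg]; omega
        · rw [show idx x = m from dif_neg h]; exact hmL
      obtain ⟨j, hj⟩ : ∃ j, (idx v).testBit j ≠ (idx u).testBit j := by
        by_contra h
        push_neg at h
        exact hne (Nat.eq_of_testBit_eq h)
      have hjL : j < L := by
        by_contra hjge
        push_neg at hjge
        apply hj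
        rw [Nat.testBit_eq_false_of_lt (lt_of_lt_of_le (hall v)
          (Nat.pow_le_pow_right (by norm_num) hjge)),
          Nat.testBit_eq_false_of_lt (lt_of_lt_of_le (hall u)
          (Nat.pow_le_pow_right (by norm_num) hjge))]
      refine ⟨⟨j, by omega⟩, v, hv, u, hue, ?_⟩
      simpa only [hXdef, if_pos hjL] using hj
  have hle : coverNum E ≤ L + 1 := Nat.sInf_le ⟨X, hcov⟩
  have hlog : ((Nat.log 2 m : ℕ) : ℝ) ≤ Real.logb 2 m := by
    have h2 : ((2 : ℕ) : ℝ) ^ Nat.log 2 m ≤ (m : ℝ) := by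
      exact_mod_cast Nat.pow_log_le_self 2 hm1.ne'
    have h3 : Real.logb 2 ((2 : ℝ) ^ Nat.log 2 m) ≤ Real.logb 2 m :=
      Real.logb_le_logb_of_le (by norm_num) (by positivity) (by exact_mod_cast h2)
    rwa [Real.logb_pow, Real.logb_self_eq_one (by norm_num), mul_one] at h3
  calc (coverNum E : ℝ) ≤ ((L + 1 : ℕ) : ℝ) := by exact_mod_cast hle
    _ = ((Nat.log 2 m : ℕ) : ℝ) + 2 := by rw [hL]; push_cast; ring
    _ ≤ Real.logb 2 m + 2 := by linarith
end

section
/- The complete k-uniform hypergraph on n vertices, K_n^k, satisfies χ^c(K_n^k) ≤ ⌈log₂(n/(k-1))⌉: there exist ⌈log₂(n/(k-1))⌉ bicolorings of the n vertices such that every k-element subset of vertices is non-monochromatic under at least one of them. -/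
theorem complete_uniform_coverNum_upper (n k t : ℕ) (hk : 2 ≤ k) (hkn : k ≤ n)
    (ht : (t : ℤ) = ⌈Real.logb 2 ((n : ℝ) / ((k : ℝ) - 1))⌉) :
    ∃ X : Fin t → Fin n → Bool,
      ∀ s : Finset (Fin n), s.card = k →
        ∃ i : Fin t, ∃ u ∈ s, ∃ v ∈ s, X i u ≠ X i v := by
  set m := k - 1 with hm
  have hm1 : 1 ≤ m := by omega
  have hmr : ((k : ℝ) - 1) = (m : ℝ) := by
    have : (m : ℝ) = (k : ℝ) - 1 := by
      rw [hm]; push_cast [Nat.cast_sub (by omega : 1 ≤ k)]; ring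
    linarith
  have hnm : n ≤ 2 ^ t * m := by
    have hpos : (0 : ℝ) < (n : ℝ) / (m : ℝ) := by
      apply div_pos <;> [exact_mod_cast (by omega : 0 < n); exact_mod_cast hm1]
    have hlog : Real.logb 2 ((n : ℝ) / (m : ℝ)) ≤ (t : ℝ) := by
      rw [hmr] at ht
      have := Int.le_ceil (Real.logb 2 ((n : ℝ) / (m : ℝ)))
      rw [← ht] at this
      exact_mod_cast this
    have h2 : (n : ℝ) / (m : ℝ) ≤ (2 : ℝ) ^ (t : ℝ) :=
      (Real.logb_le_iff_le_rpow (by norm_num) hpos).mp hlog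
    rw [Real.rpow_natCast] at h2
    have h3 : (n : ℝ) ≤ 2 ^ t * (m : ℝ) := by
      rw [div_le_iff₀ (by exact_mod_cast hm1 : (0:ℝ) < (m:ℝ))] at h2
      linarith
    exact_mod_cast h3
  refine ⟨fun i v => (v.val / m).testBit i, ?_⟩
  intro s hs
  have hq : ∀ v : Fin n, v.val / m < 2 ^ t := by
    intro v
    rw [Nat.div_lt_iff_lt_mul (by omega)]
    exact lt_of_lt_of_le v.isLt hnm
  obtain ⟨u, hu, v, hv, huv⟩ : ∃ u ∈ s, ∃ v ∈ s, u.val / m ≠ v.val / m := by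
    by_contra h
    push_neg at h
    obtain ⟨w, hw⟩ : s.Nonempty := by rw [← Finset.card_pos]; omega
    have hall : ∀ x ∈ s, x.val / m = w.val / m := fun x hx => h x hx w hw
    have hcard : s.card ≤ m := by
      have hinj : Set.InjOn (fun x : Fin n => x.val % m) s := by
        intro a ha b hb hab
        have h3 := hall a ha
        have h4 := hall b hb
        have h1 := Nat.div_add_mod a.val m
        have h2 := Nat.div_add_mod b.val m
        rw [h3] at h1
        rw [h4] at h2
        have hab' : a.val % m = b.val % m := hab
        have : a.val = b.val := by omega
        exact Fin.ext this
      have := Finset.card_le_card_of_injOn (fun x : Fin n => x.val % m)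
        (fun x _ => Finset.mem_range.mpr (Nat.mod_lt _ (by omega))) hinj
      simpa using this
    omega
  have hta := hq u
  have htb := hq v
  obtain ⟨i, hi⟩ : ∃ i, (u.val / m).testBit i ≠ (v.val / m).testBit i := by
    by_contra h
    push_neg at h
    exact huv (Nat.eq_of_testBit_eq h)
  have hit : i < t := by
    by_contra h
    push_neg at h
    have hle : (2 : ℕ) ^ t ≤ 2 ^ i := Nat.pow_le_pow_right (by norm_num) h
    have h1 : (u.val / m).testBit i = false :=
      Nat.testBit_eq_false_of_lt (lt_of_lt_of_le hta hle)
    have h2 : (v.val / m).testBit i = false :=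
      Nat.testBit_eq_false_of_lt (lt_of_lt_of_le htb hle)
    rw [h1, h2] at hi
    exact hi rfl
  exact ⟨⟨i, hit⟩, u, hu, v, hv, hi⟩
end

section
/- For any k-uniform hypergraph G, the cover independence number satisfies γ(G) ≥ k - 1: there exists an optimal bicoloring cover under which some set of at least k-1 vertices all receive the same color bit vector. -/
theorem gamma_ge_k_sub_one {α : Type*} [Fintype α] (E : Finset (Finset α)) (k : ℕ)
    (hk : 2 ≤ k) (huniform : ∀ e ∈ E, e.card = k) (hcard : k ≤ Fintype.card α)
    (hne : E.Nonempty) :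
    ∃ X : Fin (coverNum E) → α → Bool, Covers E X ∧
      ∃ S : Finset α, k - 1 ≤ S.card ∧ ∀ u ∈ S, ∀ v ∈ S, ∀ i, X i u = X i v := by
  classical
  -- some cover exists
  have hex : ∃ X : Fin (coverNum E) → α → Bool, Covers E X := by
    have hne' : {t | ∃ X : Fin t → α → Bool, Covers E X}.Nonempty := by
      refine ⟨Fintype.card α, ?_⟩
      let f := Fintype.equivFin α
      refine ⟨fun i v => decide (f v = i), ?_⟩
      intro e he
      have h2 : 2 ≤ e.card := by rw [huniform e he]; exact hk
      obtain ⟨u, hu, v, hv, huv⟩ := Finset.one_lt_card.mp h2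
      refine ⟨f u, u, hu, v, hv, ?_⟩
      have : f v ≠ f u := fun h => huv (f.injective h).symm
      simp [this]
    exact Nat.sInf_mem hne'
  set t := coverNum E with ht
  have key : ∀ j, j ≤ k - 1 → ∃ Y : Fin t → α → Bool, Covers E Y ∧
      ∃ c : Fin t → Bool,
        j ≤ (Finset.univ.filter (fun v => ∀ i, Y i v = c i)).card := by
    intro j
    induction j with
    | zero =>
      intro _
      obtain ⟨X, hX⟩ := hex
      exact ⟨X, hX, fun _ => false, Nat.zero_le _⟩
    | succ j ih =>
      intro hj
      obtain ⟨Y, hY, c, hc⟩ := ih (le_trans (Nat.le_succ j) hj)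
      set T := Finset.univ.filter (fun v => ∀ i, Y i v = c i) with hT
      by_cases hbig : j + 1 ≤ T.card
      · exact ⟨Y, hY, c, hbig⟩
      · push_neg at hbig
        have hTle : T.card ≤ k - 2 := by omega
        have hs : ∃ s, s ∉ T := by
          by_contra h
          push_neg at h
          have : T = Finset.univ := Finset.eq_univ_iff_forall.mpr h
          have := Finset.card_univ (α := α) ▸ this ▸ hTle
          omega
        obtain ⟨s, hs⟩ := hs
        refine ⟨fun i v => if v = s then c i else Y i v, ?_, c, ?_⟩
        · intro e he
          by_cases hse : s ∈ e
          · have hw : ∃ w ∈ e, w ≠ s ∧ w ∉ T := by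
              by_contra h
              push_neg at h
              have hsub : e.erase s ⊆ T := by
                intro w hw
                exact h w (Finset.mem_of_mem_erase hw) (Finset.ne_of_mem_erase hw)
              have h1 : (e.erase s).card ≤ T.card := Finset.card_le_card hsub
              have h2 : (e.erase s).card = k - 1 := by
                rw [Finset.card_erase_of_mem hse, huniform e he]
              omega
            obtain ⟨w, hw, hws, hwT⟩ := hw
            have hwc : ∃ i, Y i w ≠ c i := by
              by_contra h
              push_neg at h
              exact hwT (Finset.mem_filter.mpr ⟨Finset.mem_univ _, h⟩)
            obtain ⟨i, hi⟩ := hwc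
            refine ⟨i, w, hw, s, hse, ?_⟩
            simp [hws, hi]
          · obtain ⟨i, u, hu, v, hv, huv⟩ := hY e he
            have hus : u ≠ s := fun h => hse (h ▸ hu)
            have hvs : v ≠ s := fun h => hse (h ▸ hv)
            refine ⟨i, u, hu, v, hv, ?_⟩
            simpa [hus, hvs] using huv
        · have hsub : insert s T ⊆
              Finset.univ.filter (fun v => ∀ i, (if v = s then c i else Y i v) = c i) := by
            intro v hv
            rcases Finset.mem_insert.mp hv with h | h
            · subst h; simp
            · have hv' := (Finset.mem_filter.mp h).2
              refine Finset.mem_filter.mpr ⟨Finset.mem_univ _, fun i => ?_⟩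
              by_cases hvs : v = s
              · simp [hvs]
              · simp [hvs, hv' i]
          calc j + 1 ≤ (insert s T).card := by
                rw [Finset.card_insert_of_notMem hs]; omega
            _ ≤ _ := Finset.card_le_card hsub
  obtain ⟨Y, hY, c, hc⟩ := key (k - 1) le_rfl
  refine ⟨Y, hY, Finset.univ.filter (fun v => ∀ i, Y i v = c i), hc, ?_⟩
  intro u hu v hv i
  rw [(Finset.mem_filter.mp hu).2 i, (Finset.mem_filter.mp hv).2 i]
end

section
/- A k-uniform hypergraph G with at most 2^{(k-1)x - 1} hyperedges has a bicoloring cover of size x: if |E| ≤ 2^{(k-1)x-1}, then under x independent uniformly random bicolorings of V, the probability that every hyperedge is non-monochromatic in at least one bicoloring is at least 1/2; in particular such a cover exists. -/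
section

variable {α β ι Ω : Type*}

def IsMonochromatic (e : Finset α) (f : α → β) : Prop :=
  ∀ u ∈ e, ∀ v ∈ e, f u = f v

theorem not_covers_iff {E : Finset (Finset α)} {t : ℕ} {X : Fin t → α → Bool} :
    ¬ Covers E X ↔ ∃ e ∈ E, ∀ i, IsMonochromatic e (X i) := by
  simp [Covers, IsMonochromatic]

theorem card_isMonochromatic_mul_le [Fintype α] [Finite β] {e : Finset α} (he : e.Nonempty) :
    Nat.card {f : α → β // IsMonochromatic e f} * Nat.card β ^ (e.card - 1) ≤
      Nat.card β ^ Fintype.card α := by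
  classical
  obtain ⟨a, ha⟩ := he
  have hinj : Function.Injective fun f : {f : α → β // IsMonochromatic e f} =>
      (f.1 a, fun v : {v // v ∉ e} => f.1 v) := by
    rintro ⟨f, hf⟩ ⟨g, hg⟩ hfg
    simp only [Prod.mk.injEq, funext_iff, Subtype.forall] at hfg
    ext v
    by_cases hv : v ∈ e
    · exact (hf v hv a ha).trans (hfg.1.trans (hg a ha v hv))
    · exact hfg.2 v hv
  have hcard := Nat.card_le_card_of_injective _ hinj
  rw [Nat.card_prod, Nat.card_fun, Nat.card_eq_fintype_card (α := {v // v ∉ e}),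
    Fintype.card_subtype_compl, Fintype.card_coe] at hcard
  calc _ ≤ Nat.card β * Nat.card β ^ (Fintype.card α - e.card) * Nat.card β ^ (e.card - 1) :=
        Nat.mul_le_mul_right _ hcard
    _ = Nat.card β ^ Fintype.card α := by
        rw [← pow_succ', ← pow_add]
        have := e.card_le_univ
        have := Finset.card_pos.2 ⟨a, ha⟩
        congr 1
        omega

theorem card_forall_isMonochromatic_mul_le [Fintype ι] [Fintype α] [Finite β] {e : Finset α}
    (he : e.Nonempty) :
    Nat.card {X : ι → α → β // ∀ i, IsMonochromatic e (X i)} *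
        Nat.card β ^ ((e.card - 1) * Fintype.card ι) ≤ Nat.card (ι → α → β) := by
  rw [Nat.card_congr Equiv.subtypePiEquivPi, Nat.card_pi, Finset.prod_const, Finset.card_univ,
    Nat.card_fun, Nat.card_fun, Nat.card_eq_fintype_card (α := ι),
    Nat.card_eq_fintype_card (α := α), pow_mul, ← mul_pow]
  exact Nat.pow_le_pow_left (card_isMonochromatic_mul_le he) _

theorem card_exists_mem_mul_le [Finite Ω] (s : Finset ι) (P : ι → Ω → Prop) {M : ℕ}
    (hP : ∀ i ∈ s, Nat.card {ω // P i ω} * M ≤ Nat.card Ω) :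
    Nat.card {ω // ∃ i ∈ s, P i ω} * M ≤ s.card * Nat.card Ω := by
  have hunion := s.set_ncard_biUnion_le (fun i => {ω | P i ω})
  simp only [← Nat.card_coe_set_eq, ← Set.ofPred_exists, Set.coe_ofPred, exists_prop] at hunion
  calc _ ≤ (∑ i ∈ s, Nat.card {ω // P i ω}) * M := Nat.mul_le_mul_right M hunion
    _ ≤ ∑ _i ∈ s, Nat.card Ω := by rw [Finset.sum_mul]; exact Finset.sum_le_sum hP
    _ = s.card * Nat.card Ω := by rw [Finset.sum_const, smul_eq_mul]

theorem card_subtype_add_card_subtype_not [Finite Ω] (p : Ω → Prop) :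
    Nat.card {ω // p ω} + Nat.card {ω // ¬ p ω} = Nat.card Ω := by
  simpa only [← Nat.card_coe_set_eq, Set.compl_ofPred, Set.coe_ofPred, Set.ncard_univ] using
    Set.ncard_add_ncard_compl {ω | p ω}

end

theorem sparse_hypergraph_cover_random {α : Type*} [Fintype α] [DecidableEq α]
    (E : Finset (Finset α)) (k x : ℕ) (hk : 2 ≤ k) (hx : 1 ≤ x)
    (huniform : ∀ e ∈ E, e.card = k)
    (hsize : E.card ≤ 2 ^ ((k - 1) * x - 1)) :
    Fintype.card (Fin x → α → Bool) ≤ 2 * Nat.card {X : Fin x → α → Bool // Covers E X} ∧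
      ∃ X : Fin x → α → Bool, Covers E X := by
  have hmono : ∀ e ∈ E, Nat.card {X : Fin x → α → Bool // ∀ i, IsMonochromatic e (X i)} *
      2 ^ ((k - 1) * x) ≤ Nat.card (Fin x → α → Bool) := by
    intro e he
    have he' : e.Nonempty := Finset.card_pos.1 (by rw [huniform e he]; omega)
    simpa [huniform e he] using card_forall_isMonochromatic_mul_le (ι := Fin x) (β := Bool) he'
  have hbad := card_exists_mem_mul_le E _ hmono
  simp only [← not_covers_iff] at hbad
  have hE : 2 * E.card ≤ 2 ^ ((k - 1) * x) := by
    rw [← mul_pow_sub_one (Nat.mul_ne_zero (by omega) (by omega))]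
    exact Nat.mul_le_mul_left 2 hsize
  have hhalf :
      2 * Nat.card {X : Fin x → α → Bool // ¬ Covers E X} ≤ Nat.card (Fin x → α → Bool) := by
    refine Nat.le_of_mul_le_mul_right ?_ (by positivity : 0 < 2 ^ ((k - 1) * x))
    calc _ = 2 * (Nat.card {X : Fin x → α → Bool // ¬ Covers E X} * 2 ^ ((k - 1) * x)) := by ring
      _ ≤ 2 * E.card * Nat.card (Fin x → α → Bool) := by
        rw [mul_assoc]; exact Nat.mul_le_mul_left 2 hbad
      _ ≤ _ := by rw [mul_comm]; exact Nat.mul_le_mul_left _ hE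
  have hsplit := card_subtype_add_card_subtype_not (Covers E (t := x))
  have hpos : 0 < Nat.card (Fin x → α → Bool) := Nat.card_pos
  rw [← Nat.card_eq_fintype_card]
  refine ⟨by omega, ?_⟩
  obtain ⟨⟨X, hX⟩⟩ :=
    Nat.card_pos_iff.1 (by omega : 0 < Nat.card {X : Fin x → α → Bool // Covers E X})
  exact ⟨X, hX⟩
end

section
/- Let G be a k-uniform hypergraph in which every hyperedge intersects at most d other hyperedges. If e·(d+1) ≤ 2^{x(k-1)} (where e is Euler's number), then G has a bicoloring cover of size x. -/
open Finset

section Independence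

variable {V : Type*} [Fintype V] [DecidableEq V] {β : V → Type*} [∀ v, Fintype (β v)]

theorem card_filter_and_mul_card_eq_of_dependsOn {P Q : (∀ v, β v) → Prop}
    [DecidablePred P] [DecidablePred Q] {s : Finset V}
    (hP : DependsOn P s) (hQ : DependsOn Q (↑s)ᶜ) :
    #{ω | P ω ∧ Q ω} * Fintype.card (∀ v, β v) = #{ω | P ω} * #{ω | Q ω} := by
  have hon (ω ω' : ∀ v, β v) : ∀ v ∈ (s : Set V), s.piecewise ω ω' v = ω v :=
    fun v hv => s.piecewise_eq_of_mem _ _ hv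
  have hoff (ω ω' : ∀ v, β v) : ∀ v ∈ (s : Set V)ᶜ, s.piecewise ω ω' v = ω' v :=
    fun v hv => s.piecewise_eq_of_notMem _ _ hv
  have hswap (ω ω' : ∀ v, β v) :
      s.piecewise (s.piecewise ω ω') (s.piecewise ω' ω) = ω := by
    ext v; by_cases hv : v ∈ s <;> simp [hv]
  -- Exchanging the coordinates off `s` is an involution on pairs of outcomes that maps
  -- `{P ∧ Q} × univ` onto `{P} × {Q}`.
  let swap (q : (∀ v, β v) × (∀ v, β v)) := (s.piecewise q.1 q.2, s.piecewise q.2 q.1)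
  rw [← card_univ, ← card_product, ← card_product]
  refine card_nbij' swap swap ?_ ?_ (fun q _ => by simp [swap, hswap])
    (fun q _ => by simp [swap, hswap])
  · rintro ⟨ω, ω'⟩ h
    simp only [mem_coe, mem_product, mem_filter, mem_univ, true_and, and_true] at h ⊢
    obtain ⟨hPω, hQω⟩ := h
    exact ⟨(hP (hon ω ω')).mpr hPω, (hQ (hoff ω' ω)).mpr hQω⟩
  · rintro ⟨ω, ω'⟩ h
    simp only [mem_coe, mem_product, mem_filter, mem_univ, true_and, and_true] at h ⊢
    obtain ⟨hPω, hQω⟩ := h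
    exact ⟨(hP (hon ω ω')).mpr hPω, (hQ (hoff ω ω')).mpr hQω⟩

end Independence

theorem pow_card_mul_le_of_le_insert {ι : Type*} [DecidableEq ι] {g : Finset ι → ℝ} {c : ℝ}
    (hc : 0 ≤ c) {S T : Finset ι}
    (h : ∀ U ⊆ T, ∀ i ∈ T, i ∉ U → c * g (S ∪ U) ≤ g (insert i (S ∪ U))) :
    c ^ #T * g S ≤ g (S ∪ T) := by
  induction T using Finset.induction_on with
  | empty => simp
  | insert i T hiT ih =>
    have hT : T ⊆ insert i T := subset_insert i T
    calc c ^ #(insert i T) * g S = c * (c ^ #T * g S) := by rw [card_insert_of_notMem hiT]; ring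
      _ ≤ c * g (S ∪ T) := by
        gcongr
        exact ih fun U hU j hj => h U (hU.trans hT) j (hT hj)
      _ ≤ g (S ∪ insert i T) := by
        rw [union_insert]
        exact h T hT i (mem_insert_self i T) hiT

theorem inv_exp_mul_le_inv_mul_one_sub_inv_pow (d : ℕ) :
    (Real.exp 1 * (d + 1))⁻¹ ≤ ((d : ℝ) + 2)⁻¹ * (1 - ((d : ℝ) + 2)⁻¹) ^ d := by
  have key : ((d : ℝ) + 2)⁻¹ * (1 - ((d : ℝ) + 2)⁻¹) ^ d =
      (((d : ℝ) + 1) * (1 + ((d : ℝ) + 1)⁻¹) ^ (d + 1))⁻¹ := by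
    have h1 : 1 - ((d : ℝ) + 2)⁻¹ = (d + 1) / (d + 2) := by field_simp; ring
    have h2 : 1 + ((d : ℝ) + 1)⁻¹ = (d + 2) / (d + 1) := by field_simp; ring
    rw [h1, h2, div_pow, div_pow, pow_succ, pow_succ]
    field_simp
  rw [key, mul_comm]
  gcongr
  exact_mod_cast Real.one_add_inv_pow_le_exp (n := d + 1)

section LocalLemma

variable {ι V : Type*} {β : V → Type*} {A : ι → (∀ v, β v) → Prop}

theorem dependsOn_forall_not_of_disjoint {vbl : ι → Finset V} {S : Finset ι} {s : Finset V}
    (hA : ∀ j ∈ S, DependsOn (A j) (vbl j)) (hS : ∀ j ∈ S, Disjoint s (vbl j)) :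
    DependsOn (fun ω => ∀ j ∈ S, ¬ A j ω) (↑s)ᶜ := by
  intro ω ω' h
  have hAω : ∀ j ∈ S, A j ω = A j ω' := fun j hj =>
    hA j hj fun v hv => h v (disjoint_right.mp (hS j hj) hv)
  exact propext (forall₂_congr fun j hj => by rw [hAω j hj])

variable [DecidableEq ι] [Fintype V] [DecidableEq V] [∀ v, Fintype (β v)]
  [∀ i, DecidablePred (A i)]

theorem card_forall_not_eq_card_and_add_card_insert (S : Finset ι) (i : ι) :
    #{ω | ∀ j ∈ S, ¬ A j ω} =
      #{ω | A i ω ∧ ∀ j ∈ S, ¬ A j ω} + #{ω | ∀ j ∈ insert i S, ¬ A j ω} := by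
  rw [← card_filter_add_card_filter_not (s := {ω | ∀ j ∈ S, ¬ A j ω}) (A i)]
  simp only [filter_filter, forall_mem_insert]
  congr 2 <;> ext ω <;> simp only [mem_filter, mem_univ, true_and] <;> tauto

variable [∀ v, Nonempty (β v)] {vbl : ι → Finset V} {E : Finset ι} {d : ℕ} {B : ℝ}

-- Conditional form of the Local Lemma: `P(A i | ⋂ j ∈ S, ¬A j) ≤ B`.
theorem one_sub_mul_card_le_card_insert (hB0 : 0 ≤ B) (hB1 : B ≤ 1)
    (hA : ∀ i ∈ E, DependsOn (A i) (vbl i))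
    (hdep : ∀ i ∈ E, #{j ∈ E | j ≠ i ∧ ¬Disjoint (vbl i) (vbl j)} ≤ d)
    (hprob : ∀ i ∈ E, (#{ω | A i ω} : ℝ) ≤ B * (1 - B) ^ d * Fintype.card (∀ v, β v))
    (S : Finset ι) (hSE : S ⊆ E) {i : ι} (hiE : i ∈ E) (hiS : i ∉ S) :
    (1 - B) * #{ω | ∀ j ∈ S, ¬ A j ω} ≤ (#{ω | ∀ j ∈ insert i S, ¬ A j ω} : ℝ) := by
  induction S using Finset.strongInduction generalizing i with | H S ih => ?_
  set avoid : Finset ι → ℝ := fun T => #{ω | ∀ j ∈ T, ¬ A j ω}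
  set R := S.filter (fun j => Disjoint (vbl i) (vbl j))
  set N := S.filter (fun j => ¬Disjoint (vbl i) (vbl j))
  have hN : #N ≤ d := by
    refine (card_le_card fun j hj => ?_).trans (hdep i hiE)
    obtain ⟨hjS, hij⟩ := mem_filter.mp hj
    exact mem_filter.mpr ⟨hSE hjS, fun h => hiS (h ▸ hjS), hij⟩
  -- The neighbours `N` of `i` cost a factor `(1 - B)` each, by the induction hypothesis.
  have hgrow : (1 - B) ^ #N * avoid R ≤ avoid S := by
    have h := pow_card_mul_le_of_le_insert (g := avoid) (c := 1 - B) (S := R) (T := N)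
      (by linarith) fun U hU j hjN hjU => by
        obtain ⟨hjS, hij⟩ := mem_filter.mp hjN
        have hjRU : j ∉ R ∪ U := by simp [R, hij, hjU]
        have hRU : R ∪ U ⊂ S := (ssubset_iff_of_subset
          (union_subset (filter_subset _ S) (hU.trans (filter_subset _ S)))).mpr ⟨j, hjS, hjRU⟩
        exact ih _ hRU (hRU.subset.trans hSE) (hSE hjS) hjRU
    rwa [filter_union_filter_not_eq] at h
  have hindep : (#{ω | A i ω ∧ ∀ j ∈ R, ¬ A j ω} : ℝ) * Fintype.card (∀ v, β v) =
      #{ω | A i ω} * avoid R := by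
    have h := card_filter_and_mul_card_eq_of_dependsOn (hA i hiE)
      (dependsOn_forall_not_of_disjoint (fun j hj => hA j (hSE (mem_of_mem_filter j hj)))
        fun j hj => (mem_filter.mp hj).2)
    simp only [avoid]
    exact_mod_cast h
  have hΩ : (0 : ℝ) < Fintype.card (∀ v, β v) := by exact_mod_cast Fintype.card_pos
  have hbad : (#{ω | A i ω ∧ ∀ j ∈ S, ¬ A j ω} : ℝ) ≤ B * avoid S := by
    refine le_of_mul_le_mul_right ?_ hΩ
    calc (#{ω | A i ω ∧ ∀ j ∈ S, ¬ A j ω} : ℝ) * Fintype.card (∀ v, β v)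
        ≤ #{ω | A i ω ∧ ∀ j ∈ R, ¬ A j ω} * Fintype.card (∀ v, β v) := by
          gcongr
          exact filter_subset _ S
      _ = #{ω | A i ω} * avoid R := hindep
      _ ≤ B * (1 - B) ^ d * Fintype.card (∀ v, β v) * avoid R := by gcongr; exact hprob i hiE
      _ = B * ((1 - B) ^ d * avoid R) * Fintype.card (∀ v, β v) := by ring
      _ ≤ B * ((1 - B) ^ #N * avoid R) * Fintype.card (∀ v, β v) := by
          have : (1 - B) ^ d ≤ (1 - B) ^ #N := pow_le_pow_of_le_one (by linarith) (by linarith) hN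
          gcongr
      _ ≤ B * avoid S * Fintype.card (∀ v, β v) := by gcongr
  have hsplit : avoid S = #{ω | A i ω ∧ ∀ j ∈ S, ¬ A j ω} + avoid (insert i S) := by
    simp only [avoid]
    exact_mod_cast card_forall_not_eq_card_and_add_card_insert (A := A) S i
  linarith

theorem exists_forall_not_of_le_mul_one_sub_pow (hB0 : 0 ≤ B) (hB1 : B < 1)
    (hA : ∀ i ∈ E, DependsOn (A i) (vbl i))
    (hdep : ∀ i ∈ E, #{j ∈ E | j ≠ i ∧ ¬Disjoint (vbl i) (vbl j)} ≤ d)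
    (hprob : ∀ i ∈ E, (#{ω | A i ω} : ℝ) ≤ B * (1 - B) ^ d * Fintype.card (∀ v, β v)) :
    ∃ ω, ∀ i ∈ E, ¬ A i ω := by
  have hgood := pow_card_mul_le_of_le_insert (g := fun T => (#{ω | ∀ j ∈ T, ¬ A j ω} : ℝ))
    (c := 1 - B) (S := ∅) (T := E) (by linarith) fun U hU i hi hiU => by
      simpa using one_sub_mul_card_le_card_insert hB0 hB1.le hA hdep hprob U hU hi hiU
  have hΩ : 0 < #{ω | ∀ j ∈ (∅ : Finset ι), ¬ A j ω} := by simp [Fintype.card_pos]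
  have hpos : (0 : ℝ) < (1 - B) ^ #E * #{ω | ∀ j ∈ (∅ : Finset ι), ¬ A j ω} := by
    have : (0 : ℝ) < 1 - B := by linarith
    positivity
  have hE : (0 : ℝ) < #{ω | ∀ j ∈ E, ¬ A j ω} := hpos.trans_le (by simpa using hgood)
  obtain ⟨ω, hω⟩ := card_pos.mp (by exact_mod_cast hE : 0 < #{ω | ∀ j ∈ E, ¬ A j ω})
  exact ⟨ω, (mem_filter.mp hω).2⟩

theorem exists_forall_not_of_exp_mul_le_one {p : ℝ}
    (hA : ∀ i ∈ E, DependsOn (A i) (vbl i))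
    (hdep : ∀ i ∈ E, #{j ∈ E | j ≠ i ∧ ¬Disjoint (vbl i) (vbl j)} ≤ d)
    (hprob : ∀ i ∈ E, (#{ω | A i ω} : ℝ) ≤ p * Fintype.card (∀ v, β v))
    (hp : Real.exp 1 * p * (d + 1) ≤ 1) :
    ∃ ω, ∀ i ∈ E, ¬ A i ω := by
  -- The textbook `B = 1 / (d + 1)` degenerates to `B = 1` when `d = 0`; `1 / (d + 2)` does not.
  refine exists_forall_not_of_le_mul_one_sub_pow (B := ((d : ℝ) + 2)⁻¹) (by positivity)
    (inv_lt_one_of_one_lt₀ (by linarith [d.cast_nonneg (α := ℝ)])) hA hdep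
    fun i hi => (hprob i hi).trans ?_
  gcongr
  calc p ≤ (Real.exp 1 * (d + 1))⁻¹ := by rw [← one_div, le_div_iff₀ (by positivity)]; linarith
    _ ≤ _ := inv_exp_mul_le_inv_mul_one_sub_inv_pow d

end LocalLemma

theorem card_monochromatic_mul_pow_sub_one {V β : Type*} [Fintype V] [DecidableEq V] [Fintype β]
    [DecidableEq β] {e : Finset V} (he : e.Nonempty) :
    #{ω : V → β | ∀ u ∈ e, ∀ v ∈ e, ω u = ω v} * Fintype.card β ^ (#e - 1) =
      Fintype.card (V → β) := by
  obtain ⟨u₀, hu₀⟩ := he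
  have hfiber (c : β) :
      ({ω ∈ {ω : V → β | ∀ u ∈ e, ∀ v ∈ e, ω u = ω v} | ω u₀ = c} : Finset (V → β)) =
        Fintype.piFinset fun v => if v ∈ e then {c} else univ := by
    ext ω
    simp only [mem_filter, mem_univ, true_and, Fintype.mem_piFinset]
    constructor
    · rintro ⟨h, rfl⟩ v
      split_ifs with hv
      · simp [h v hv u₀ hu₀]
      · exact mem_univ _
    · intro h
      have h' : ∀ v ∈ e, ω v = c := fun v hv => by simpa [hv] using h v
      exact ⟨fun u hu v hv => (h' u hu).trans (h' v hv).symm, h' u₀ hu₀⟩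
  rw [card_eq_sum_card_fiberwise (f := fun ω => ω u₀) (t := univ) fun _ _ => mem_univ _]
  simp_rw [hfiber, Fintype.card_piFinset, apply_ite card, card_singleton, card_univ]
  simp only [prod_ite, prod_const_one, prod_const, one_mul, sum_const, card_univ, smul_eq_mul,
    Fintype.card_fun]
  have he : 0 < #e := card_pos.mpr ⟨u₀, hu₀⟩
  have hcompl : #{v | v ∉ e} = Fintype.card V - #e := by
    rw [filter_not, filter_mem_eq_inter, univ_inter, card_univ_sdiff]
  rw [hcompl, ← pow_succ', ← pow_add]
  congr 1
  have := card_le_univ e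
  omega

theorem cover_of_bounded_dependency_general {α : Type*} [Fintype α] [DecidableEq α]
    (E : Finset (Finset α)) (k x d : ℕ) (hk : 2 ≤ k)
    (huniform : ∀ e ∈ E, e.card = k)
    (hdep : ∀ e ∈ E, (E.filter (fun f => f ≠ e ∧ (e ∩ f).Nonempty)).card ≤ d)
    (hlll : Real.exp 1 * ((d : ℝ) + 1) ≤ 2 ^ (x * (k - 1))) :
    ∃ X : Fin x → α → Bool, Covers E X := by
  let Mono (e : Finset α) (ω : α → Fin x → Bool) : Prop := ∀ u ∈ e, ∀ v ∈ e, ω u = ω v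
  have hMono : ∀ e ∈ E, DependsOn (Mono e) e := fun e _ ω ω' h => by
    simp only [Mono]
    exact propext (forall₂_congr fun u hu => forall₂_congr fun v hv => by rw [h u hu, h v hv])
  have hdep' : ∀ e ∈ E, #{f ∈ E | f ≠ e ∧ ¬Disjoint e f} ≤ d := by
    simpa [not_disjoint_iff_nonempty_inter] using hdep
  have hprob : ∀ e ∈ E, (#{ω | Mono e ω} : ℝ) ≤
      (2 ^ (x * (k - 1)) : ℝ)⁻¹ * Fintype.card (α → Fin x → Bool) := by
    intro e he
    have hcard : #{ω | Mono e ω} * 2 ^ (x * (k - 1)) = Fintype.card (α → Fin x → Bool) := by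
      have hne : e.Nonempty := card_pos.mp (by rw [huniform e he]; omega)
      simpa [huniform e he, pow_mul] using
        card_monochromatic_mul_pow_sub_one (β := Fin x → Bool) hne
    rw [← hcard, Nat.cast_mul, mul_comm, Nat.cast_pow, Nat.cast_ofNat,
      mul_inv_cancel_right₀ (by positivity)]
  obtain ⟨ω, hω⟩ := exists_forall_not_of_exp_mul_le_one (vbl := id) hMono hdep' hprob (by
    rw [mul_right_comm, ← div_eq_mul_inv, div_le_one (by positivity)]
    exact hlll)
  refine ⟨fun i a => ω a i, fun e he => ?_⟩
  obtain ⟨u, hu, v, hv, huv⟩ : ∃ u ∈ e, ∃ v ∈ e, ω u ≠ ω v := by simpa [Mono] using hω e he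
  obtain ⟨i, hi⟩ := Function.ne_iff.mp huv
  exact ⟨i, u, hu, v, hv, hi⟩

theorem cover_of_bounded_dependency {α : Type*} [Fintype α] [DecidableEq α]
    (E : Finset (Finset α)) (k x d : ℕ) (hk : 2 ≤ k) (hx : 1 ≤ x)
    (huniform : ∀ e ∈ E, e.card = k)
    (hdep : ∀ e ∈ E, (E.filter (fun f => f ≠ e ∧ (e ∩ f).Nonempty)).card ≤ d)
    (hlll : Real.exp 1 * ((d : ℝ) + 1) ≤ 2 ^ (x * (k - 1))) :
    ∃ X : Fin x → α → Bool, Covers E X :=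
  cover_of_bounded_dependency_general E k x d hk huniform hdep hlll
end

section
/- For every k ≥ 2 and every t ≥ 1, there exists a k-uniform hypergraph G whose clique number ω(G) equals k (no k+1 vertices have all their k-subsets as hyperedges) but whose bicoloring cover number χ^c(G) exceeds t. -/
def NNv (k t : ℕ) : ℕ := k ^ 2 ^ t + 1
def nnv (k t : ℕ) : ℕ := NNv k t * NNv k t
def enc (k t : ℕ) (a b : Fin (NNv k t)) : Fin (nnv k t) := finProdFinEquiv (a, b)
def pfst (k t : ℕ) (v : Fin (nnv k t)) : Fin (NNv k t) := (finProdFinEquiv.symm v).1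
def psnd (k t : ℕ) (v : Fin (nnv k t)) : Fin (NNv k t) := (finProdFinEquiv.symm v).2

@[simp] lemma pfst_enc (k t : ℕ) (a b : Fin (NNv k t)) : pfst k t (enc k t a b) = a := by
  simp [pfst, enc]

@[simp] lemma psnd_enc (k t : ℕ) (a b : Fin (NNv k t)) : psnd k t (enc k t a b) = b := by
  simp [psnd, enc]

lemma enc_inj (k t : ℕ) {a b a' b' : Fin (NNv k t)} (h : enc k t a b = enc k t a' b') :
    a = a' ∧ b = b' := by
  have := finProdFinEquiv.injective h
  exact ⟨congrArg Prod.fst this, congrArg Prod.snd this⟩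

def chainEdge (k t : ℕ) (f : Fin (k+1) → Fin (NNv k t)) : Finset (Fin (nnv k t)) :=
  Finset.univ.image (fun i : Fin k => enc k t (f i.castSucc) (f i.succ))

open Classical in
noncomputable def EE (k t : ℕ) : Finset (Finset (Fin (nnv k t))) :=
  (Finset.univ.filter (fun f : Fin (k+1) → Fin (NNv k t) => StrictMono f)).image (chainEdge k t)

lemma mem_EE {k t : ℕ} {e : Finset (Fin (nnv k t))} :
    e ∈ EE k t ↔ ∃ f : Fin (k+1) → Fin (NNv k t), StrictMono f ∧ chainEdge k t f = e := by
  classical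
  simp [EE, Finset.mem_image, Finset.mem_filter]

lemma EE_card (k t : ℕ) : ∀ e ∈ EE k t, e.card = k := by
  intro e he
  obtain ⟨f, hf, rfl⟩ := mem_EE.mp he
  rw [chainEdge, Finset.card_image_of_injective _ ?_, Finset.card_univ, Fintype.card_fin]
  intro i j hij
  have := (enc_inj k t hij).1
  have := hf.injective this
  exact Fin.castSucc_injective _ this

lemma EE_nonempty (k t : ℕ) (hk : 2 ≤ k) : (EE k t).Nonempty := by
  have hle : k + 1 ≤ NNv k t := by
    have h1 : k ≤ k ^ 2 ^ t := Nat.le_self_pow (by positivity) k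
    simp only [NNv]; omega
  refine ⟨chainEdge k t (fun i => Fin.castLE hle i), mem_EE.mpr ⟨_, ?_, rfl⟩⟩
  intro i j hij
  exact hij

lemma EE_fst_inj {k t : ℕ} {e : Finset (Fin (nnv k t))} (he : e ∈ EE k t)
    {p q : Fin (nnv k t)} (hp : p ∈ e) (hq : q ∈ e) (hfst : pfst k t p = pfst k t q) :
    p = q := by
  obtain ⟨f, hf, rfl⟩ := mem_EE.mp he
  obtain ⟨i, -, rfl⟩ := Finset.mem_image.mp hp
  obtain ⟨j, -, rfl⟩ := Finset.mem_image.mp hq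
  simp only [pfst_enc] at hfst
  have : i = j := Fin.castSucc_injective _ (hf.injective hfst)
  rw [this]

lemma EE_pred {k t : ℕ} {e : Finset (Fin (nnv k t))} (he : e ∈ EE k t)
    {q : Fin (nnv k t)} (hq : q ∈ e) (hmin : ∃ p ∈ e, pfst k t p < pfst k t q) :
    ∃ p ∈ e, psnd k t p = pfst k t q ∧ pfst k t p < pfst k t q := by
  obtain ⟨f, hf, rfl⟩ := mem_EE.mp he
  obtain ⟨j, -, rfl⟩ := Finset.mem_image.mp hq
  obtain ⟨p, hp, hlt⟩ := hmin
  obtain ⟨i, -, rfl⟩ := Finset.mem_image.mp hp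
  simp only [pfst_enc] at hlt ⊢
  have hij : (i : ℕ) < (j : ℕ) := by
    have h2 := hf.lt_iff_lt.mp hlt
    rw [Fin.castSucc_lt_castSucc_iff, Fin.lt_def] at h2
    exact h2
  have hj0 : 0 < (j : ℕ) := by omega
  have hjk : (j : ℕ) - 1 < k := by omega
  refine ⟨enc k t (f (⟨(j : ℕ) - 1, hjk⟩ : Fin k).castSucc) (f (⟨(j : ℕ) - 1, hjk⟩ : Fin k).succ),
    Finset.mem_image.mpr ⟨_, Finset.mem_univ _, rfl⟩, ?_, ?_⟩
  · rw [psnd_enc]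
    congr 1
    ext
    simp only [Fin.val_succ, Fin.coe_castSucc]
    omega
  · rw [pfst_enc]
    apply hf
    rw [Fin.lt_def]
    simp only [Fin.coe_castSucc]
    omega

lemma EE_clique (k t : ℕ) (hk : 2 ≤ k) (S : Finset (Fin (nnv k t)))
    (hS : ∀ e : Finset (Fin (nnv k t)), e ⊆ S → e.card = k → e ∈ EE k t) :
    S.card ≤ k := by
  by_contra hbig
  push_neg at hbig
  obtain ⟨T, hTS, hT⟩ := Finset.exists_subset_card_eq (Nat.succ_le_of_lt hbig)
  have hE : ∀ e : Finset (Fin (nnv k t)), e ⊆ T → e.card = k → e ∈ EE k t :=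
    fun e he hc => hS e (he.trans hTS) hc
  -- erase-one subsets are edges
  have herase : ∀ r ∈ T, T.erase r ∈ EE k t := by
    intro r hr
    refine hE _ (Finset.erase_subset _ _) ?_
    rw [Finset.card_erase_of_mem hr, hT]
    omega
  -- pfst is injective on T
  have hinj : ∀ p ∈ T, ∀ q ∈ T, p ≠ q → pfst k t p ≠ pfst k t q := by
    intro p hp q hq hne heq
    have h3 : 1 ≤ ((T.erase p).erase q).card := by
      rw [Finset.card_erase_of_mem (Finset.mem_erase.mpr ⟨hne.symm, hq⟩),
        Finset.card_erase_of_mem hp, hT]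
      omega
    obtain ⟨r, hr⟩ := Finset.card_pos.mp (show 0 < ((T.erase p).erase q).card by omega)
    obtain ⟨hrq, hrp, hrT⟩ : r ≠ q ∧ r ≠ p ∧ r ∈ T := by
      have h1 := Finset.mem_erase.mp hr
      have h2 := Finset.mem_erase.mp h1.2
      exact ⟨h1.1, h2.1, h2.2⟩
    have hedge := herase r hrT
    exact hne (EE_fst_inj hedge (Finset.mem_erase.mpr ⟨fun h => hrp h.symm, hp⟩)
      (Finset.mem_erase.mpr ⟨fun h => hrq h.symm, hq⟩) heq)
  -- three smallest elements by pfst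
  have hTne : T.Nonempty := Finset.card_pos.mp (show 0 < T.card by omega)
  obtain ⟨p0, hp0T, hp0min⟩ := Finset.exists_min_image T (pfst k t) hTne
  have hT1ne : (T.erase p0).Nonempty := by
    apply Finset.card_pos.mp
    rw [Finset.card_erase_of_mem hp0T, hT]; omega
  obtain ⟨p1, hp1T1, hp1min⟩ := Finset.exists_min_image (T.erase p0) (pfst k t) hT1ne
  have hT2ne : ((T.erase p0).erase p1).Nonempty := by
    apply Finset.card_pos.mp
    rw [Finset.card_erase_of_mem hp1T1, Finset.card_erase_of_mem hp0T, hT]; omega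
  obtain ⟨p2, hp2T2, hp2min⟩ := Finset.exists_min_image ((T.erase p0).erase p1) (pfst k t) hT2ne
  have hp1T : p1 ∈ T := (Finset.mem_erase.mp hp1T1).2
  have hp1p0 : p1 ≠ p0 := (Finset.mem_erase.mp hp1T1).1
  have hp2T1 : p2 ∈ T.erase p0 := (Finset.mem_erase.mp hp2T2).2
  have hp2T : p2 ∈ T := (Finset.mem_erase.mp hp2T1).2
  have hp2p1 : p2 ≠ p1 := (Finset.mem_erase.mp hp2T2).1
  have hp2p0 : p2 ≠ p0 := (Finset.mem_erase.mp hp2T1).1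
  have h01 : pfst k t p0 < pfst k t p1 :=
    lt_of_le_of_ne (hp0min p1 hp1T) (hinj p0 hp0T p1 hp1T (Ne.symm hp1p0))
  have h02 : pfst k t p0 < pfst k t p2 :=
    lt_of_le_of_ne (hp0min p2 hp2T) (hinj p0 hp0T p2 hp2T (Ne.symm hp2p0))
  -- first edge : T.erase p2, gives psnd p0 = pfst p1
  have key1 : psnd k t p0 = pfst k t p1 := by
    have hedge := herase p2 hp2T
    have hq : p1 ∈ T.erase p2 := Finset.mem_erase.mpr ⟨fun h => hp2p1 h.symm, hp1T⟩
    have hpin : p0 ∈ T.erase p2 := Finset.mem_erase.mpr ⟨fun h => hp2p0 h.symm, hp0T⟩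
    obtain ⟨p, hpE, hsnd, hplt⟩ := EE_pred hedge hq ⟨p0, hpin, h01⟩
    have hpT : p ∈ T := (Finset.mem_erase.mp hpE).2
    have hpp0 : p = p0 := by
      by_contra hne
      have : pfst k t p1 ≤ pfst k t p :=
        hp1min p (Finset.mem_erase.mpr ⟨hne, hpT⟩)
      exact absurd hplt (not_lt.mpr this)
    rw [← hpp0]; exact hsnd
  -- second edge : T.erase p1, gives psnd p0 = pfst p2
  have key2 : psnd k t p0 = pfst k t p2 := by
    have hedge := herase p1 hp1T
    have hq : p2 ∈ T.erase p1 := Finset.mem_erase.mpr ⟨hp2p1, hp2T⟩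
    have hpin : p0 ∈ T.erase p1 := Finset.mem_erase.mpr ⟨fun h => hp1p0 h.symm, hp0T⟩
    obtain ⟨p, hpE, hsnd, hplt⟩ := EE_pred hedge hq ⟨p0, hpin, h02⟩
    have hpp1 : p ≠ p1 := (Finset.mem_erase.mp hpE).1
    have hpT : p ∈ T := (Finset.mem_erase.mp hpE).2
    have hpp0 : p = p0 := by
      by_contra hne
      have : pfst k t p2 ≤ pfst k t p :=
        hp2min p (Finset.mem_erase.mpr ⟨hpp1, Finset.mem_erase.mpr ⟨hne, hpT⟩⟩)
      exact absurd hplt (not_lt.mpr this)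
    rw [← hpp0]; exact hsnd
  exact hinj p1 hp1T p2 hp2T (Ne.symm hp2p1) (key1 ▸ key2 ▸ rfl)

def glen {β : Type*} [DecidableEq β] (col : ℕ → ℕ → β) (a : ℕ) (χ : β) : ℕ :=
  ((Finset.range a).attach.filter (fun b => col b.1 a = χ)).sup
    (fun b => glen col b.1 χ + 1)
termination_by a
decreasing_by exact Finset.mem_range.mp b.2

lemma glen_lt {β : Type*} [DecidableEq β] (col : ℕ → ℕ → β) {b a : ℕ} (h : b < a)
    {χ : β} (hc : col b a = χ) : glen col b χ < glen col a χ := by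
  conv_rhs => rw [glen]
  have hm : (⟨b, Finset.mem_range.mpr h⟩ : {x // x ∈ Finset.range a}) ∈
      (Finset.range a).attach.filter (fun b => col b.1 a = χ) := by
    simp [Finset.mem_filter, hc]
  have hle := Finset.le_sup (f := fun b => glen col b.1 χ + 1) hm
  simp only at hle
  omega

lemma glen_chain {β : Type*} [DecidableEq β] (col : ℕ → ℕ → β) :
    ∀ a m (χ : β), m ≤ glen col a χ →
      ∃ f : ℕ → ℕ, (∀ i j, i < j → j ≤ m → f i < f j) ∧ f m = a ∧
        ∀ i < m, col (f i) (f (i+1)) = χ := by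
  intro a
  induction a using Nat.strong_induction_on with
  | _ a ih =>
    intro m χ hm
    match m with
    | 0 => exact ⟨fun _ => a, by omega, rfl, by omega⟩
    | (m'+1) =>
      rw [glen] at hm
      set s := (Finset.range a).attach.filter (fun b => col b.1 a = χ) with hs
      have hne : s.Nonempty := by
        by_contra hemp
        rw [Finset.not_nonempty_iff_eq_empty] at hemp
        rw [hemp] at hm; simp at hm
      obtain ⟨b, hbs, hsup⟩ := Finset.exists_mem_eq_sup s hne (fun b => glen col b.1 χ + 1)
      rw [hsup] at hm
      have hba : b.1 < a := Finset.mem_range.mp b.2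
      have hcol : col b.1 a = χ := by
        have := Finset.mem_filter.mp hbs
        exact this.2
      obtain ⟨f, hmono, hend, hcols⟩ := ih b.1 hba m' χ (by omega)
      refine ⟨fun i => if i ≤ m' then f i else a, ?_, by simp, ?_⟩
      · intro i j hij hjm
        by_cases hj : j ≤ m'
        · have hi : i ≤ m' := by omega
          beta_reduce
          rw [if_pos (by omega : i ≤ m'), if_pos hj]
          exact hmono i j hij hj
        · have hi : i ≤ m' := by omega
          beta_reduce
          rw [if_pos hi, if_neg hj]
          have h1 : f i ≤ f m' := by
            rcases Nat.lt_or_ge i m' with h | h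
            · exact le_of_lt (hmono i m' h le_rfl)
            · have : i = m' := by omega
              simp [this]
          have h2 : f m' < a := by rw [hend]; exact hba
          omega
      · intro i hi
        by_cases hi' : i < m'
        · have h1 : i ≤ m' := by omega
          have h2 : i + 1 ≤ m' := by omega
          beta_reduce
          rw [if_pos h1, if_pos h2]
          exact hcols i hi'
        · have hieq : i = m' := by omega
          beta_reduce
          rw [if_pos (by omega : i ≤ m'), if_neg (by omega : ¬ i + 1 ≤ m'), hieq, hend]
          exact hcol

lemma EE_nocover (k t : ℕ) (hk : 2 ≤ k) (X : Fin t → Fin (nnv k t) → Bool) :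
    ¬ Covers (EE k t) X := by
  intro hX
  have hNpos : 0 < NNv k t := Nat.succ_pos _
  set col : ℕ → ℕ → (Fin t → Bool) :=
    fun a b => fun i => X i (enc k t ⟨a % NNv k t, Nat.mod_lt _ hNpos⟩
      ⟨b % NNv k t, Nat.mod_lt _ hNpos⟩) with hcoldef
  by_cases hbig : ∃ (a : Fin (NNv k t)) (χ : Fin t → Bool), k ≤ glen col (a : ℕ) χ
  · obtain ⟨a, χ, hge⟩ := hbig
    obtain ⟨f, hmono, hend, hcols⟩ := glen_chain col (a : ℕ) k χ hge
    have hlt : ∀ i ≤ k, f i < NNv k t := by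
      intro i hi
      have h1 : f i ≤ f k := by
        rcases Nat.lt_or_ge i k with h | h
        · exact le_of_lt (hmono i k h le_rfl)
        · have : i = k := by omega
          rw [this]
      have h2 : f k < NNv k t := by rw [hend]; exact a.2
      omega
    set g : Fin (k+1) → Fin (NNv k t) :=
      fun i => ⟨f (i : ℕ), hlt (i : ℕ) (Nat.lt_succ_iff.mp i.2)⟩ with hgdef
    have hg : StrictMono g := by
      intro i j hij
      show f (i : ℕ) < f (j : ℕ)
      exact hmono (i : ℕ) (j : ℕ) hij (Nat.lt_succ_iff.mp j.2)
    have hE : chainEdge k t g ∈ EE k t := mem_EE.mpr ⟨g, hg, rfl⟩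
    obtain ⟨i, u, hu, v, hv, hne⟩ := hX _ hE
    have key : ∀ w ∈ chainEdge k t g, X i w = χ i := by
      intro w hw
      obtain ⟨j, -, rfl⟩ := Finset.mem_image.mp hw
      have hj : (j : ℕ) < k := j.2
      have hc := hcols (j : ℕ) hj
      have harg : enc k t (g j.castSucc) (g j.succ) =
          enc k t ⟨f (j : ℕ) % NNv k t, Nat.mod_lt _ hNpos⟩
            ⟨f ((j : ℕ) + 1) % NNv k t, Nat.mod_lt _ hNpos⟩ := by
        congr 1
        · ext
          show f ((j.castSucc : Fin (k+1)) : ℕ) = f (j : ℕ) % NNv k t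
          rw [Nat.mod_eq_of_lt (hlt _ (by omega)), Fin.coe_castSucc]
        · ext
          show f ((j.succ : Fin (k+1)) : ℕ) = f ((j : ℕ) + 1) % NNv k t
          rw [Nat.mod_eq_of_lt (hlt _ (by omega)), Fin.val_succ]
      rw [harg]
      have := congrFun hc i
      exact this
    exact hne (by rw [key u hu, key v hv])
  · push_neg at hbig
    have hΦ : Function.Injective
        (fun (a : Fin (NNv k t)) => fun χ : Fin t → Bool =>
          (⟨glen col (a : ℕ) χ, hbig a χ⟩ : Fin k)) := by
      intro a b hab
      by_contra hne
      have hne' : (a : ℕ) ≠ (b : ℕ) := fun h => hne (Fin.ext h)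
      rcases Nat.lt_or_ge (a : ℕ) (b : ℕ) with h | h
      · have := glen_lt col h (rfl : col (a : ℕ) (b : ℕ) = col (a : ℕ) (b : ℕ))
        have h2 := congrFun hab (col (a : ℕ) (b : ℕ))
        simp only [Fin.mk.injEq] at h2
        omega
      · have h' : (b : ℕ) < (a : ℕ) := by omega
        have := glen_lt col h' (rfl : col (b : ℕ) (a : ℕ) = col (b : ℕ) (a : ℕ))
        have h2 := congrFun hab (col (b : ℕ) (a : ℕ))
        simp only [Fin.mk.injEq] at h2
        omega
    have hcard := Fintype.card_le_of_injective _ hΦ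
    rw [Fintype.card_fin, Fintype.card_fun, Fintype.card_fin, Fintype.card_fun,
      Fintype.card_bool, Fintype.card_fin] at hcard
    have : NNv k t = k ^ 2 ^ t + 1 := rfl
    omega

theorem exists_clique_k_large_coverNum (k t : ℕ) (hk : 2 ≤ k) (ht : 1 ≤ t) :
    ∃ (n : ℕ) (E : Finset (Finset (Fin n))),
      (∀ e ∈ E, e.card = k) ∧ E.Nonempty ∧
      (∀ S : Finset (Fin n),
        (∀ e : Finset (Fin n), e ⊆ S → e.card = k → e ∈ E) → S.card ≤ k) ∧
      t < coverNum E := by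
  refine ⟨nnv k t, EE k t, EE_card k t, EE_nonempty k t hk, EE_clique k t hk, ?_⟩
  have hmem : ∃ X : Fin (nnv k t) → Fin (nnv k t) → Bool, Covers (EE k t) X := by
    refine ⟨fun i v => decide (v = i), ?_⟩
    intro e he
    have hc := EE_card k t e he
    have h2 : 1 < e.card := by omega
    obtain ⟨u, hu, v, hv, huv⟩ := Finset.one_lt_card.mp h2
    refine ⟨u, u, hu, v, hv, ?_⟩
    simp [huv.symm]
  have hsinf : coverNum (EE k t) ∈
      {m | ∃ X : Fin m → Fin (nnv k t) → Bool, Covers (EE k t) X} :=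
    Nat.sInf_mem ⟨_, hmem⟩
  obtain ⟨X, hX⟩ := hsinf
  by_contra hle
  push_neg at hle
  have hY : Covers (EE k t)
      (fun (i : Fin t) =>
        if h : (i : ℕ) < coverNum (EE k t) then X ⟨i, h⟩ else fun _ => true) := by
    intro e he
    obtain ⟨i, u, hu, v, hv, hne⟩ := hX e he
    refine ⟨⟨(i : ℕ), lt_of_lt_of_le i.2 hle⟩, u, hu, v, hv, ?_⟩
    simpa [i.isLt] using hne
  exact EE_nocover k t hk _ hY
end
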